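/- Let G be a finite group acting transitively on a finite set Ω, let H be the stabilizer of a point of Ω, let p be a prime dividing |H|, let D be a union of conjugacy classes of G each consisting of elements of order p of maximal p-fixity, and let g ∈ H ∩ D. If the action of G on Ω is binary, then every element of Δ(g, D) of order p is an element of maximal p-fixity. -/

import Mathlib

/-- `I` and `J` are `r`-related under the action of `G`. -/
def Related (G : Type*) {Ω : Type*} [Group G] [MulAction G Ω] {n : ℕ} (r : ℕ)
    (I J : Fin n → Ω) : Prop :=
  ∀ k : Fin r → Fin n, StrictMono k → ∃ g : G, ∀ i, g • I (k i) = J (k i)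

/-- The action of `G` on `Ω` is binary. -/
def IsBinary (G Ω : Type*) [Group G] [MulAction G Ω] : Prop :=
  ∀ n : ℕ, 2 ≤ n → ∀ I J : Fin n → Ω, Related G 2 I J → Related G n I J

/-- The graph `Γ(D)` associated to a subset `D` of a group. -/
def classGraph {G : Type*} [Group G] (D : Set G) : SimpleGraph G where
  Adj g h := g ≠ h ∧ g ∈ D ∧ h ∈ D ∧ Commute g h ∧ (g * h⁻¹ ∈ D ∨ h * g⁻¹ ∈ D)
  symm := by
    constructor
    rintro g h ⟨hne, hg, hh, hc, hd⟩
    exact ⟨hne.symm, hh, hg, hc.symm, hd.symm⟩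
  loopless := by constructor; rintro g ⟨hne, -⟩; exact hne rfl

/-- `Δ(g, D)`: the subgroup generated by the vertices in the connected component
of `Γ(D)` containing `g`. -/
def Delta {G : Type*} [Group G] (g : G) (D : Set G) : Subgroup G :=
  Subgroup.closure {h | h ∈ D ∧ (classGraph D).Reachable g h}

/-- The component group `Δ(g)` of `g` : here `D` is the conjugacy class of `g`. -/
def DeltaC {G : Type*} [Group G] (g : G) : Subgroup G :=
  Delta g {x | IsConj g x}

/-- `D` is a union of conjugacy classes. -/
def IsUnionConjClasses {G : Type*} [Group G] (D : Set G) : Prop :=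
  ∀ x ∈ D, ∀ y : G, IsConj x y → y ∈ D

/-- The fixity of `g` acting on `Ω`: the number of fixed points of `g`. -/
noncomputable def fixity (G Ω : Type*) [Group G] [MulAction G Ω] (g : G) : ℕ :=
  Nat.card (MulAction.fixedBy Ω g)

/-- `g` is an element of order `p` of maximal `p`-fixity. -/
def MaxPFixity (G Ω : Type*) [Group G] [MulAction G Ω] (p : ℕ) (g : G) : Prop :=
  orderOf g = p ∧ ∀ h : G, orderOf h = p → fixity G Ω h ≤ fixity G Ω g

/-- The ascending sequence of unions of conjugacy classes `D_1 = D`,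
`D_{i+1}` = union of the conjugacy classes of elements of order `p`
meeting `Δ(g, D_i)`. -/
def DSeq {G : Type*} [Group G] (g : G) (D : Set G) (p : ℕ) : ℕ → Set G
  | 0 => D
  | i + 1 => {x : G | orderOf x = p ∧ ∃ y ∈ Delta g (DSeq g D p i), IsConj x y}

/-- `Δ_∞(g, D)`: the union of the chain `Δ(g, D_1) ≤ Δ(g, D_2) ≤ ⋯`. -/
def DeltaInf {G : Type*} [Group G] (g : G) (D : Set G) (p : ℕ) : Subgroup G :=
  ⨆ i : ℕ, Delta g (DSeq g D p i)

/-- The terminal component group `Δ_∞(g)` of an element `g` of order `p`. -/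
def DeltaInfC {G : Type*} [Group G] (g : G) (p : ℕ) : Subgroup G :=
  DeltaInf g {x | IsConj g x} p

/-!
Adjacent vertices `a`, `b` of `Γ(D)` have the same fixed points. Put `k = a b⁻¹`, which has
maximal `p`-fixity because `k` or `k⁻¹` lies in `D`, and suppose that `y` is fixed by `b` but
not by `a`. The map that is `k` on `Fix b \ Fix a` and the identity
on `Fix a ∪ Fix k` agrees on any two points with one of `1`, `a`, `k`, so by binarity it is
induced by some `z ∈ G`. As `k` moves `y` along an orbit of length `p` inside `Fix b \ Fix a`,
`p` divides the order of `z`, and a power of `z` of order `p` fixes `Fix a ∪ Fix k`. Maximality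
of the fixity of `k` forces `Fix a ⊆ Fix k`, hence `Fix a ⊆ Fix a ∩ Fix k ⊆ Fix b`, and equality
of fixities gives `Fix a = Fix b ∋ y`, a contradiction.

Hence every generator of `Δ(g, D)` fixes `Fix g` pointwise, so every element of order `p` of
`Δ(g, D)` has fixity at least that of `g`, which is maximal.
-/

open MulAction

section

variable {G Ω : Type*} [Group G] [MulAction G Ω] {p : ℕ}

lemma IsBinary.exists_smul_eq_on (hbin : IsBinary G Ω) {s : Set Ω} [Finite s] (f : Ω → Ω)
    (hf : ∀ x ∈ s, ∀ y ∈ s, ∃ e : G, e • x = f x ∧ e • y = f y) :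
    ∃ z : G, ∀ x ∈ s, z • x = f x := by
  rcases lt_or_ge (Nat.card s) 2 with hs | hs
  · have hsub : s.Subsingleton :=
      (Set.subsingleton_coe s).mp (Finite.card_le_one_iff_subsingleton.mp (by omega))
    rcases s.eq_empty_or_nonempty with rfl | ⟨x, hx⟩
    · exact ⟨1, by simp⟩
    · obtain ⟨e, he, -⟩ := hf x hx x hx
      exact ⟨e, fun y hy => by rwa [hsub hy hx]⟩
  · let I : Fin (Nat.card s) → Ω := fun i => (Finite.equivFin s).symm i
    have hI : ∀ i, I i ∈ s := fun i => ((Finite.equivFin s).symm i).2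
    have h2 : Related G 2 I (f ∘ I) := by
      intro k _
      obtain ⟨e, h0, h1⟩ := hf _ (hI (k 0)) _ (hI (k 1))
      exact ⟨e, Fin.forall_fin_two.mpr ⟨h0, h1⟩⟩
    obtain ⟨z, hz⟩ := hbin _ hs I (f ∘ I) h2 id strictMono_id
    refine ⟨z, fun x hx => ?_⟩
    have hzx := hz (Finite.equivFin s ⟨x, hx⟩)
    dsimp only [id, I, Function.comp_apply] at hzx
    rwa [Equiv.symm_apply_apply] at hzx

lemma pow_smul_eq_pow_smul_of_eqOn {M : Type*} [Monoid M] [MulAction M Ω] {k z : M}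
    {Y : Set Ω} (hY : Set.MapsTo (k • ·) Y Y) (hzk : Set.EqOn (z • ·) (k • ·) Y)
    {y : Ω} (hy : y ∈ Y) (n : ℕ) : z ^ n • y = k ^ n • y := by
  have hmem : ∀ n : ℕ, k ^ n • y ∈ Y := by
    intro n
    induction n with
    | zero => simpa using hy
    | succ n ih => rw [pow_succ', mul_smul]; exact hY ih
  induction n with
  | zero => simp
  | succ n ih =>
    rw [pow_succ', mul_smul, ih, pow_succ', mul_smul]
    exact hzk (hmem n)

lemma prime_dvd_orderOf_of_pow_smul_eq {M : Type*} [Monoid M] [MulAction M Ω]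
    (hp : p.Prime) {k z : M} {y : Ω} (hk : orderOf k = p) (hky : k • y ≠ y)
    (hzk : ∀ n : ℕ, z ^ n • y = k ^ n • y) : p ∣ orderOf z := by
  have hperiod : period k y = p := by
    have hdvd := period_dvd_orderOf k y
    rw [hk] at hdvd
    exact (hp.eq_one_or_self_of_dvd _ hdvd).resolve_left (mt period_eq_one_iff.mp hky)
  rw [← hperiod, ← pow_smul_eq_iff_period_dvd, ← hzk, pow_orderOf_eq_one, one_smul]

lemma smul_mem_fixedBy_iff_of_commute {g h : G} (hgh : Commute g h) {x : Ω} :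
    h • x ∈ fixedBy Ω g ↔ x ∈ fixedBy Ω g := by
  rw [mem_fixedBy, mem_fixedBy, ← mul_smul, hgh.eq, mul_smul, smul_left_cancel_iff]

lemma exists_orderOf_eq_fixedBy_union_subset [Finite G] [Finite Ω] (hbin : IsBinary G Ω)
    (hp : p.Prime) {a b : G} (hab : Commute a b) (hk : orderOf (a * b⁻¹) = p)
    {y : Ω} (hyb : y ∈ fixedBy Ω b) (hya : y ∉ fixedBy Ω a) :
    ∃ ζ : G, orderOf ζ = p ∧ fixedBy Ω a ∪ fixedBy Ω (a * b⁻¹) ⊆ fixedBy Ω ζ := by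
  classical
  set k := a * b⁻¹
  set Y := fixedBy Ω b \ fixedBy Ω a
  have hka : Set.EqOn (k • ·) (a • ·) (fixedBy Ω b) := fun x hx => by
    simp only [k, mul_smul, inv_smul_eq_iff.mpr hx.symm]
  have hkY : Set.MapsTo (k • ·) Y Y := fun x hx =>
    ⟨(smul_mem_fixedBy_iff_of_commute (hab.symm.mul_right (Commute.refl b).inv_right)).mpr hx.1,
      mt (smul_mem_fixedBy_iff_of_commute ((Commute.refl a).mul_right hab.inv_right)).mp hx.2⟩
  have hYk : ∀ x ∈ Y, x ∉ fixedBy Ω k := fun x hx hxk =>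
    hx.2 (by simpa [k] using fixedBy_mul (α := Ω) k b ⟨hxk, hx.1⟩)
  let S := fixedBy Ω a ∪ fixedBy Ω k ∪ Y
  let f : Ω → Ω := fun x => if x ∈ Y then k • x else x
  have hfY : ∀ x ∈ Y, f x = k • x := fun x hx => if_pos hx
  have hfS : ∀ x ∈ fixedBy Ω a ∪ fixedBy Ω k, f x = x := fun x hx =>
    if_neg fun hxY => hx.elim hxY.2 (hYk x hxY)
  have hpair_Y : ∀ x ∈ Y, ∀ x' ∈ S, ∃ e : G, e • x = f x ∧ e • x' = f x' := by
    intro x hx x' hx'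
    rcases hx' with (hx' | hx') | hx'
    · exact ⟨a, by rw [hfY x hx]; exact (hka hx.1).symm, by rw [hfS x' (.inl hx')]; exact hx'⟩
    · exact ⟨k, (hfY x hx).symm, by rw [hfS x' (.inr hx')]; exact hx'⟩
    · exact ⟨k, (hfY x hx).symm, (hfY x' hx').symm⟩
  have hpair : ∀ x ∈ S, ∀ x' ∈ S, ∃ e : G, e • x = f x ∧ e • x' = f x' := by
    intro x hx x' hx'
    by_cases hxY : x ∈ Y
    · exact hpair_Y x hxY x' hx'
    by_cases hx'Y : x' ∈ Y
    · exact (hpair_Y x' hx'Y x hx).imp fun _ => And.symm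
    exact ⟨1, by rw [one_smul, hfS x (hx.resolve_right hxY)],
      by rw [one_smul, hfS x' (hx'.resolve_right hx'Y)]⟩
  obtain ⟨z, hz⟩ := hbin.exists_smul_eq_on f hpair
  have hzfix : z ∈ fixingSubgroup G (fixedBy Ω a ∪ fixedBy Ω k) :=
    (mem_fixingSubgroup_iff G).mpr fun x hx => by rw [hz x (.inl hx), hfS x hx]
  have hzk : Set.EqOn (z • ·) (k • ·) Y := fun x hx => by
    show z • x = k • x
    rw [hz x (.inr hx), hfY x hx]
  have hpz : p ∣ orderOf z := prime_dvd_orderOf_of_pow_smul_eq hp hk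
    (hYk y ⟨hyb, hya⟩) (pow_smul_eq_pow_smul_of_eqOn hkY hzk ⟨hyb, hya⟩)
  exact ⟨z ^ (orderOf z / p), orderOf_pow_orderOf_div (orderOf_pos z).ne' hpz,
    (mem_fixingSubgroup_iff_subset_fixedBy G).mp (Subgroup.pow_mem _ hzfix _)⟩

lemma fixity_eq_ncard (g : G) : fixity G Ω g = (fixedBy Ω g).ncard :=
  Nat.card_coe_set_eq _

lemma MaxPFixity.fixity_eq {a b : G} (ha : MaxPFixity G Ω p a) (hb : MaxPFixity G Ω p b) :
    fixity G Ω a = fixity G Ω b :=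
  le_antisymm (hb.2 a ha.1) (ha.2 b hb.1)

lemma MaxPFixity.inv {x : G} (hx : MaxPFixity G Ω p x) : MaxPFixity G Ω p x⁻¹ := by
  refine ⟨by rw [orderOf_inv, hx.1], fun h hh => ?_⟩
  simpa only [fixity, fixedBy_inv] using hx.2 h hh

lemma fixedBy_eq_of_classGraph_adj [Finite G] [Finite Ω] (hbin : IsBinary G Ω) (hp : p.Prime)
    {D : Set G} (hDfix : ∀ x ∈ D, MaxPFixity G Ω p x) {a b : G} (hab : (classGraph D).Adj a b) :
    fixedBy Ω a = fixedBy Ω b := by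
  obtain ⟨-, ha, hb, hcomm, hk⟩ := hab
  have hk : MaxPFixity G Ω p (a * b⁻¹) :=
    hk.elim (hDfix _) fun h => by simpa using (hDfix _ h).inv
  have hcard : (fixedBy Ω a).ncard = (fixedBy Ω b).ncard := by
    rw [← fixity_eq_ncard, ← fixity_eq_ncard]
    exact (hDfix a ha).fixity_eq (hDfix b hb)
  suffices hba : fixedBy Ω b ⊆ fixedBy Ω a from
    (Set.eq_of_subset_of_ncard_le hba hcard.le).symm
  intro y hyb
  by_contra hya
  obtain ⟨ζ, hζ, hζfix⟩ := exists_orderOf_eq_fixedBy_union_subset hbin hp hcomm hk.1 hyb hya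
  have hkζ : fixedBy Ω (a * b⁻¹) = fixedBy Ω ζ := by
    refine Set.eq_of_subset_of_ncard_le (Set.subset_union_right.trans hζfix) ?_
    rw [← fixity_eq_ncard, ← fixity_eq_ncard]
    exact hk.2 ζ hζ
  have hab : fixedBy Ω a ⊆ fixedBy Ω b := fun x hx => by
    simpa using fixedBy_mul (α := Ω) a⁻¹ (a * b⁻¹)
      ⟨(fixedBy_inv Ω a).symm ▸ hx, hkζ ▸ hζfix (.inl hx)⟩
  exact hya ((Set.eq_of_subset_of_ncard_le hab hcard.ge).symm ▸ hyb)

lemma fixedBy_eq_of_classGraph_reachable [Finite G] [Finite Ω] (hbin : IsBinary G Ω)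
    (hp : p.Prime) {D : Set G} (hDfix : ∀ x ∈ D, MaxPFixity G Ω p x) {a b : G}
    (hab : (classGraph D).Reachable a b) : fixedBy Ω a = fixedBy Ω b := by
  obtain ⟨w⟩ := hab
  induction w with
  | nil => rfl
  | cons hadj _ ih => rw [fixedBy_eq_of_classGraph_adj hbin hp hDfix hadj, ih]

lemma Delta_le_fixingSubgroup [Finite G] [Finite Ω] (hbin : IsBinary G Ω) (hp : p.Prime)
    {D : Set G} (hDfix : ∀ x ∈ D, MaxPFixity G Ω p x) (g : G) :
    Delta g D ≤ fixingSubgroup G (fixedBy Ω g) :=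
  (Subgroup.closure_le _).mpr fun _ ⟨_, hreach⟩ => (mem_fixingSubgroup_iff_subset_fixedBy G).mpr
    (fixedBy_eq_of_classGraph_reachable hbin hp hDfix hreach).le

end

theorem stmt3_general {G Ω : Type*} [Group G] [Fintype G] [Fintype Ω] [MulAction G Ω]
    (p : ℕ) (hp : p.Prime)
    (D : Set G)
    (hDfix : ∀ x ∈ D, MaxPFixity G Ω p x)
    (g : G) (hgD : g ∈ D)
    (hbin : IsBinary G Ω) :
    ∀ x ∈ Delta g D, orderOf x = p → MaxPFixity G Ω p x := by
  intro x hx hxp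
  have hgx : fixedBy Ω g ⊆ fixedBy Ω x :=
    (mem_fixingSubgroup_iff_subset_fixedBy G).mp (Delta_le_fixingSubgroup hbin hp hDfix g hx)
  have hfix : fixity G Ω g ≤ fixity G Ω x := by
    rw [fixity_eq_ncard, fixity_eq_ncard]
    exact Set.ncard_le_ncard hgx
  exact ⟨hxp, fun h hh => ((hDfix g hgD).2 h hh).trans hfix⟩

theorem stmt3 {G Ω : Type*} [Group G] [Fintype G] [Fintype Ω] [MulAction G Ω]
    [MulAction.IsPretransitive G Ω] (ω : Ω)
    (p : ℕ) (hp : p.Prime)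
    (hdvd : p ∣ Nat.card (MulAction.stabilizer G ω))
    (D : Set G) (hD : IsUnionConjClasses D)
    (hDfix : ∀ x ∈ D, MaxPFixity G Ω p x)
    (g : G) (hgH : g ∈ MulAction.stabilizer G ω) (hgD : g ∈ D)
    (hbin : IsBinary G Ω) :
    ∀ x ∈ Delta g D, orderOf x = p → MaxPFixity G Ω p x :=
  stmt3_general p hp D hDfix g hgD hbin
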